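/- Let X be a random variable with values in [0,1]^d admitting a density with respect to the Lebesgue measure on [0,1]^d, let Z be a real-valued square-integrable random variable, and let ((X_m, Z_m))_{m ≥ 1} be a sequence of independent random variables each distributed as (X, Z). For a ∈ [0,1]^d write B_a = Π_{j=1}^d [0, a(j)). Define ν_M(α, β, a) = (1/M) Σ_{m=1}^M (Z_m − α·1{X_m ∈ B_a} − β·1{X_m ∉ B_a})² and ν(α, β, a) = E[(Z − α·1{X ∈ B_a} − β·1{X ∉ B_a})²]. Fix C > 0, set K = [−C, C]² × [0,1]^d and S* = {(α, β, a) ∈ K : ν(α, β, a) = inf_K ν}, and for each M let (α_M, β_M, a_M) ∈ K satisfy ν_M(α_M, β_M, a_M) = inf_K ν_M. Then, almost surely, the Euclidean distance from (α_M, β_M, a_M) to S* tends to 0 as M → ∞. -/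

import Mathlib

open MeasureTheory ProbabilityTheory Filter Topology Metric

/-!
For parameters `q` within distance `r` of `p`, the tree loss at `q` is squeezed between two
envelopes obtained by enlarging or shrinking the box and the two levels by `r`. Since `X` has a
density, almost surely no coordinate of `X` lies on a face of the box, so by dominated convergence
both envelope integrals tend to `ν p` as `r → 0`. This bracketing gives continuity of `ν`, and,
after covering the compact set `K` by finitely many such balls and applying the strong law of
large numbers to the finitely many envelopes, almost sure uniform convergence of `ν_M` to `ν`
on `K`. Minimisers of functions converging uniformly on a compact set to a continuous limit
approach the set of minimisers of the limit.
-/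

/-- The squared loss `(z − α·1{x ∈ B_a} − β·1{x ∉ B_a})²`, where
`B_a = Π_j [0, a(j))`, as a function of the data `(x, z)` and parameters `(α, β, a)`. -/
noncomputable def treeLoss {d : ℕ} (x : Fin d → ℝ) (z : ℝ) (p : ℝ × ℝ × (Fin d → ℝ)) : ℝ :=
  (z - p.1 * (Set.univ.pi fun j => Set.Ico (0 : ℝ) (p.2.2 j)).indicator (fun _ => (1 : ℝ)) x
     - p.2.1 * ((Set.univ.pi fun j => Set.Ico (0 : ℝ) (p.2.2 j))ᶜ.indicator
        (fun _ => (1 : ℝ)) x)) ^ 2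


section Argmin

variable {ι α : Type*} {l : Filter ι} {K : Set α} {ν : α → ℝ} {G : ι → α}

theorem tendsto_apply_of_isMinOn_of_tendstoUniformlyOn {F : ι → α → ℝ} {c : ℝ}
    (hc : IsLeast (ν '' K) c) (hF : TendstoUniformlyOn F ν l K) (hG : ∀ i, G i ∈ K)
    (hmin : ∀ i, IsMinOn (F i) K (G i)) : Tendsto (ν ∘ G) l (𝓝 c) := by
  obtain ⟨⟨p, hpK, rfl⟩, hlow⟩ := hc
  rw [Metric.tendsto_nhds]
  intro ε hε
  filter_upwards [Metric.tendstoUniformlyOn_iff.1 hF (ε / 2) (half_pos hε)] with i hi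
  have hGi := hi (G i) (hG i)
  have hp := hi p hpK
  have hFmin : F i (G i) ≤ F i p := isMinOn_iff.1 (hmin i) p hpK
  have hνmin : ν p ≤ ν (G i) := hlow ⟨G i, hG i, rfl⟩
  rw [Real.dist_eq, abs_lt] at hGi hp
  rw [Function.comp_apply, Real.dist_eq, abs_lt]
  constructor <;> linarith [hGi.1, hGi.2, hp.1, hp.2]

theorem tendsto_infDist_setOf_eq_csInf [MetricSpace α] (hK : IsCompact K)
    (hν : ContinuousOn ν K) (hG : ∀ i, G i ∈ K) (h : Tendsto (ν ∘ G) l (𝓝 (sInf (ν '' K)))) :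
    Tendsto (fun i => infDist (G i) {p ∈ K | ν p = sInf (ν '' K)}) l (𝓝 0) := by
  set S := {p ∈ K | ν p = sInf (ν '' K)}
  refine tendsto_order.2 ⟨fun a ha => Eventually.of_forall fun i => ha.trans_le infDist_nonneg,
    fun ε hε => ?_⟩
  set T := {q ∈ K | ε ≤ infDist q S}
  have hT : IsCompact T :=
    hK.of_isClosed_subset (hK.isClosed.inter (isClosed_le continuous_const
      (continuous_infDist_pt S))) fun q hq => hq.1
  rcases T.eq_empty_or_nonempty with hTe | hTne
  · exact Eventually.of_forall fun i => not_le.1 fun hle => hTe.subset (⟨hG i, hle⟩ : G i ∈ T)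
  obtain ⟨q, hqT, hqmin⟩ := hT.exists_isMinOn hTne (hν.mono fun q hq => hq.1)
  have hlt : sInf (ν '' K) < ν q := by
    refine (csInf_le (hK.bddBelow_image hν) ⟨q, hqT.1, rfl⟩).lt_of_ne fun heq => ?_
    have hqS : q ∈ S := ⟨hqT.1, heq.symm⟩
    exact hε.not_ge (infDist_zero_of_mem hqS ▸ hqT.2)
  filter_upwards [h.eventually (gt_mem_nhds hlt)] with i hi
  exact not_le.1 fun hle => (isMinOn_iff.1 hqmin _ ⟨hG i, hle⟩).not_gt hi

theorem tendsto_infDist_setOf_eq_csInf_of_tendstoUniformlyOn [MetricSpace α] [Nonempty ι]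
    {F : ι → α → ℝ} (hK : IsCompact K) (hν : ContinuousOn ν K)
    (hF : TendstoUniformlyOn F ν l K) (hG : ∀ i, G i ∈ K) (hmin : ∀ i, IsMinOn (F i) K (G i)) :
    Tendsto (fun i => infDist (G i) {p ∈ K | ν p = sInf (ν '' K)}) l (𝓝 0) :=
  tendsto_infDist_setOf_eq_csInf hK hν hG <| tendsto_apply_of_isMinOn_of_tendstoUniformlyOn
    ((hK.image_of_continuousOn hν).isLeast_sInf ⟨_, _, hG (Classical.arbitrary ι), rfl⟩) hF hG hmin

end Argmin

section EmpiricalMean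

variable {Ω E : Type*}

noncomputable def empiricalMean (W : ℕ → Ω → E) (f : E → ℝ) (M : ℕ) (ω : Ω) : ℝ :=
  (M : ℝ)⁻¹ * ∑ m ∈ Finset.range M, f (W m ω)

theorem empiricalMean_mono {W : ℕ → Ω → E} {f g : E → ℝ} (h : f ≤ g) (M : ℕ) (ω : Ω) :
    empiricalMean W f M ω ≤ empiricalMean W g M ω :=
  mul_le_mul_of_nonneg_left (Finset.sum_le_sum fun m _ => h _) (by positivity)

theorem empiricalMean_nonneg {W : ℕ → Ω → E} {f : E → ℝ} (h : 0 ≤ f) (M : ℕ) (ω : Ω) :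
    0 ≤ empiricalMean W f M ω :=
  mul_nonneg (by positivity) (Finset.sum_nonneg fun m _ => h _)

variable [MeasurableSpace Ω] [MeasurableSpace E] {μ : Measure Ω} {ρ : Measure E} {W : ℕ → Ω → E}

theorem ae_tendsto_empiricalMean (hW : ∀ m, Measurable (W m)) (hindep : iIndepFun W μ)
    (hident : ∀ m, μ.map (W m) = ρ) {f : E → ℝ} (hf : Measurable f) (hint : Integrable f ρ) :
    ∀ᵐ ω ∂μ, Tendsto (empiricalMean W f · ω) atTop (𝓝 (∫ w, f w ∂ρ)) := by
  have hid : ∀ m, IdentDistrib (f ∘ W m) (f ∘ W 0) μ μ := fun m =>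
    (IdentDistrib.comp ⟨(hW m).aemeasurable, (hW 0).aemeasurable, by rw [hident, hident]⟩ hf)
  have hint0 : Integrable (f ∘ W 0) μ := by
    rw [← hident 0] at hint
    exact hint.comp_measurable (hW 0)
  have hmean : ∫ ω, (f ∘ W 0) ω ∂μ = ∫ w, f w ∂ρ := by
    rw [← hident 0, integral_map (hW 0).aemeasurable hf.aestronglyMeasurable]; rfl
  have := strong_law_ae (fun m => f ∘ W m) hint0
    (fun i j hij => (hindep.indepFun hij).comp hf hf) hid
  rwa [hmean] at this

end EmpiricalMean

section Bracketing

variable {α E : Type*} [PseudoMetricSpace α] [MeasurableSpace E] (ρ : Measure E)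
  (ℓ : α → E → ℝ)

def HasLocalBracket (p : α) (ε : ℝ) : Prop :=
  ∃ r > 0, ∃ L U : E → ℝ, Measurable L ∧ Measurable U ∧ Integrable L ρ ∧ Integrable U ρ ∧
    (∀ q ∈ ball p r, L ≤ ℓ q ∧ ℓ q ≤ U) ∧ ∫ w, U w ∂ρ ≤ ∫ w, L w ∂ρ + ε

variable {ρ ℓ}

theorem integral_mem_Icc_of_le_of_le {f L U : E → ℝ} (hf : AEStronglyMeasurable f ρ)
    (hL : Integrable L ρ) (hU : Integrable U ρ) (hLf : L ≤ f) (hfU : f ≤ U) :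
    ∫ w, f w ∂ρ ∈ Set.Icc (∫ w, L w ∂ρ) (∫ w, U w ∂ρ) :=
  have hfi := integrable_of_le_of_le hf (ae_of_all _ hLf) (ae_of_all _ hfU) hL hU
  ⟨integral_mono hL hfi hLf, integral_mono hfi hU hfU⟩

theorem continuousAt_integral_of_hasLocalBracket (hℓ : ∀ q, AEStronglyMeasurable (ℓ q) ρ)
    {p : α} (h : ∀ ε > 0, HasLocalBracket ρ ℓ p ε) :
    ContinuousAt (fun q => ∫ w, ℓ q w ∂ρ) p := by
  refine Metric.continuousAt_iff.2 fun ε hε => ?_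
  obtain ⟨r, hr, L, U, -, -, hL, hU, hLU, hwidth⟩ := h (ε / 2) (half_pos hε)
  refine ⟨r, hr, fun {q} hq => ?_⟩
  have hq' := integral_mem_Icc_of_le_of_le (hℓ q) hL hU (hLU q hq).1 (hLU q hq).2
  have hp' := integral_mem_Icc_of_le_of_le (hℓ p) hL hU (hLU p (mem_ball_self hr)).1
    (hLU p (mem_ball_self hr)).2
  rw [Real.dist_eq, abs_lt]
  constructor <;> linarith [hq'.1, hq'.2, hp'.1, hp'.2]

variable {Ω : Type*} [MeasurableSpace Ω] {μ : Measure Ω} {W : ℕ → Ω → E}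

theorem ae_eventually_forall_abs_empiricalMean_sub_lt (hW : ∀ m, Measurable (W m))
    (hindep : iIndepFun W μ) (hident : ∀ m, μ.map (W m) = ρ)
    (hℓ : ∀ q, AEStronglyMeasurable (ℓ q) ρ) {K : Set α} (hK : IsCompact K) {ε : ℝ} (hε : 0 < ε)
    (hbr : ∀ p ∈ K, HasLocalBracket ρ ℓ p ε) :
    ∀ᵐ ω ∂μ, ∀ᶠ M in atTop, ∀ q ∈ K,
      |empiricalMean W (ℓ q) M ω - ∫ w, ℓ q w ∂ρ| < 2 * ε := by
  choose! r hr L U hLm hUm hL hU hLU hwidth using hbr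
  obtain ⟨t, htK, hcover⟩ :=
    hK.elim_nhds_subcover (fun p => ball p (r p)) fun p hp => ball_mem_nhds p (hr p hp)
  have hslln : ∀ᵐ ω ∂μ, ∀ p ∈ t,
      Tendsto (empiricalMean W (L p) · ω) atTop (𝓝 (∫ w, L p w ∂ρ)) ∧
      Tendsto (empiricalMean W (U p) · ω) atTop (𝓝 (∫ w, U p w ∂ρ)) :=
    (ae_ball_iff t.countable_toSet).2 fun p hp =>
      have hpK := htK p hp
      (ae_tendsto_empiricalMean hW hindep hident (hLm p hpK) (hL p hpK)).and
        (ae_tendsto_empiricalMean hW hindep hident (hUm p hpK) (hU p hpK))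
  filter_upwards [hslln] with ω hω
  have hev : ∀ᶠ M in atTop, ∀ p ∈ t,
      ∫ w, L p w ∂ρ - ε < empiricalMean W (L p) M ω ∧
      empiricalMean W (U p) M ω < ∫ w, U p w ∂ρ + ε :=
    (eventually_all_finset t).2 fun p hp =>
      ((hω p hp).1.eventually (lt_mem_nhds (sub_lt_self _ hε))).and
        ((hω p hp).2.eventually (gt_mem_nhds (lt_add_of_pos_right _ hε)))
  filter_upwards [hev] with M hM q hq
  obtain ⟨p, hpt, hqp⟩ := Set.mem_iUnion₂.1 (hcover hq)
  have hpK := htK p hpt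
  obtain ⟨hLq, hqU⟩ := hLU p hpK q hqp
  have hint := integral_mem_Icc_of_le_of_le (hℓ q) (hL p hpK) (hU p hpK) hLq hqU
  have hemp := empiricalMean_mono (W := W) hLq M ω
  have hemp' := empiricalMean_mono (W := W) hqU M ω
  have := hwidth p hpK
  rw [abs_lt]
  constructor <;> linarith [(hM p hpt).1, (hM p hpt).2, hint.1, hint.2]

theorem ae_tendstoUniformlyOn_empiricalMean (hW : ∀ m, Measurable (W m))
    (hindep : iIndepFun W μ) (hident : ∀ m, μ.map (W m) = ρ)
    (hℓ : ∀ q, AEStronglyMeasurable (ℓ q) ρ) {K : Set α} (hK : IsCompact K)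
    (hbr : ∀ ε > 0, ∀ p ∈ K, HasLocalBracket ρ ℓ p ε) :
    ∀ᵐ ω ∂μ, TendstoUniformlyOn (fun M q => empiricalMean W (ℓ q) M ω)
      (fun q => ∫ w, ℓ q w ∂ρ) atTop K := by
  have h := fun k : ℕ => ae_eventually_forall_abs_empiricalMean_sub_lt hW hindep hident hℓ hK
    (Nat.one_div_pos_of_nat (n := k)) (hbr _ Nat.one_div_pos_of_nat)
  filter_upwards [ae_all_iff.2 h] with ω hω
  refine Metric.tendstoUniformlyOn_iff.2 fun ε hε => ?_
  obtain ⟨k, hk⟩ := exists_nat_one_div_lt (half_pos hε)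
  filter_upwards [hω k] with M hM q hq
  rw [dist_comm, Real.dist_eq]
  linarith [hM q hq]

end Bracketing

section Box

variable {ι : Type*}

def box (a : ι → ℝ) : Set (ι → ℝ) := Set.univ.pi fun j => Set.Ico 0 (a j)

theorem box_mono {a b : ι → ℝ} (h : a ≤ b) : box a ⊆ box b :=
  Set.pi_mono fun j _ => Set.Ico_subset_Ico_right (h j)

theorem measurableSet_box [Countable ι] (a : ι → ℝ) : MeasurableSet (box a) :=
  MeasurableSet.univ_pi fun _ => measurableSet_Ico

theorem eventually_mem_box_iff [Finite ι] {a x : ι → ℝ} (hx : ∀ j, x j ≠ a j) :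
    ∀ᶠ b in 𝓝 a, (x ∈ box b ↔ x ∈ box a) := by
  have h : ∀ j, ∀ᶠ b in 𝓝 a, (x j < b j ↔ x j < a j) := fun j => by
    have hj : Tendsto (fun b : ι → ℝ => b j) (𝓝 a) (𝓝 (a j)) := (continuous_apply j).tendsto a
    rcases (hx j).lt_or_gt with hlt | hgt
    · filter_upwards [hj.eventually (lt_mem_nhds hlt)] with b hb
      exact iff_of_true hb hlt
    · filter_upwards [hj.eventually (gt_mem_nhds hgt)] with b hb
      exact iff_of_false hb.not_gt hgt.not_gt
  filter_upwards [eventually_all.2 h] with b hb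
  simp only [box, Set.mem_univ_pi, Set.mem_Ico, hb]

-- Decoupling the two boxes lets the envelopes widen one region while shrinking the other.
noncomputable def boxSplit (a b : ι → ℝ) (u v : ℝ) (x : ι → ℝ) : ℝ :=
  (box a).indicator (fun _ => u) x + (box b)ᶜ.indicator (fun _ => v) x

theorem boxSplit_mono {a a' b b' x : ι → ℝ} {u u' v v' : ℝ} (ha : a ≤ a') (hb : b' ≤ b)
    (hu : u ≤ u') (hv : v ≤ v') (hu' : 0 ≤ u') (hv' : 0 ≤ v') :
    boxSplit a b u v x ≤ boxSplit a' b' u' v' x :=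
  add_le_add
    ((Set.indicator_le_indicator hu).trans
      (Set.indicator_le_indicator_of_subset (box_mono ha) (fun _ => hu') x))
    ((Set.indicator_le_indicator hv).trans
      (Set.indicator_le_indicator_of_subset (Set.compl_subset_compl.2 (box_mono hb))
        (fun _ => hv') x))

theorem abs_boxSplit_le (a b : ι → ℝ) (u v : ℝ) (x : ι → ℝ) :
    |boxSplit a b u v x| ≤ |u| + |v| :=
  (abs_add_le _ _).trans <| add_le_add (by simpa using norm_indicator_le_norm_self (fun _ => u) x)
    (by simpa using norm_indicator_le_norm_self (s := (box b)ᶜ) (fun _ => v) x)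

theorem tendsto_boxSplit [Finite ι] {β : Type*} {l : Filter β} {a x : ι → ℝ}
    (hx : ∀ j, x j ≠ a j) {a₁ a₂ : β → ι → ℝ} {u v : β → ℝ} {u₀ v₀ : ℝ}
    (ha₁ : Tendsto a₁ l (𝓝 a)) (ha₂ : Tendsto a₂ l (𝓝 a)) (hu : Tendsto u l (𝓝 u₀))
    (hv : Tendsto v l (𝓝 v₀)) :
    Tendsto (fun i => boxSplit (a₁ i) (a₂ i) (u i) (v i) x) l (𝓝 (boxSplit a a u₀ v₀ x)) := by
  have hfixed : Tendsto (fun i => boxSplit a a (u i) (v i) x) l (𝓝 (boxSplit a a u₀ v₀ x)) := by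
    by_cases hxa : x ∈ box a
    · simpa [boxSplit, hxa] using hu
    · simpa [boxSplit, hxa] using hv
  refine hfixed.congr' ?_
  filter_upwards [ha₁.eventually (eventually_mem_box_iff hx),
    ha₂.eventually (eventually_mem_box_iff hx)] with i h₁ h₂
  by_cases hxa : x ∈ box a
  · simp [boxSplit, hxa, h₁.2 hxa, h₂.2 hxa]
  · simp [boxSplit, hxa, mt h₁.1 hxa, mt h₂.1 hxa]

theorem measurable_boxSplit [Countable ι] {E : Type*} [MeasurableSpace E] {φ : E → ι → ℝ}
    (hφ : Measurable φ) {u v : E → ℝ} (hu : Measurable u) (hv : Measurable v) (a b : ι → ℝ) :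
    Measurable fun w => boxSplit a b (u w) (v w) (φ w) :=
  (hu.indicator (hφ (measurableSet_box a))).add (hv.indicator (hφ (measurableSet_box b).compl))

theorem ae_forall_apply_ne_of_absolutelyContinuous [Fintype ι] {ν : Measure (ι → ℝ)}
    (h : ν ≪ volume) (a : ι → ℝ) : ∀ᵐ x ∂ν, ∀ j, x j ≠ a j :=
  ae_all_iff.2 fun j => h.ae_le <| by
    rw [volume_pi]; exact Measure.ae_eval_ne (fun _ : ι => (volume : Measure ℝ)) j (a j)

end Box

section TreeLoss

variable {d : ℕ}

theorem treeLoss_eq_boxSplit (x : Fin d → ℝ) (z : ℝ) (p : ℝ × ℝ × (Fin d → ℝ)) :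
    treeLoss x z p = boxSplit p.2.2 p.2.2 ((z - p.1) ^ 2) ((z - p.2.1) ^ 2) x := by
  by_cases hx : x ∈ box p.2.2 <;> simp_all [treeLoss, boxSplit, box]

theorem measurable_treeLoss (p : ℝ × ℝ × (Fin d → ℝ)) :
    Measurable fun w : (Fin d → ℝ) × ℝ => treeLoss w.1 w.2 p := by
  simp only [treeLoss_eq_boxSplit]
  exact measurable_boxSplit measurable_fst (by fun_prop) (by fun_prop) _ _

noncomputable def upperLoss (p : ℝ × ℝ × (Fin d → ℝ)) (r : ℝ) (w : (Fin d → ℝ) × ℝ) : ℝ :=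
  boxSplit (fun j => p.2.2 j + r) (fun j => p.2.2 j - r)
    ((|w.2 - p.1| + r) ^ 2) ((|w.2 - p.2.1| + r) ^ 2) w.1

noncomputable def lowerLoss (p : ℝ × ℝ × (Fin d → ℝ)) (r : ℝ) (w : (Fin d → ℝ) × ℝ) : ℝ :=
  boxSplit (fun j => p.2.2 j - r) (fun j => p.2.2 j + r)
    (max (|w.2 - p.1| - r) 0 ^ 2) (max (|w.2 - p.2.1| - r) 0 ^ 2) w.1

theorem sq_sub_le_sq_abs_sub_add {z c c' r : ℝ} (h : |c' - c| ≤ r) :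
    (z - c') ^ 2 ≤ (|z - c| + r) ^ 2 := by
  rw [← sq_abs (z - c')]
  refine pow_le_pow_left₀ (abs_nonneg _) ?_ 2
  linarith [abs_sub_le z c c', abs_sub_comm c c']

theorem sq_max_abs_sub_sub_le_sq_sub {z c c' r : ℝ} (h : |c' - c| ≤ r) :
    max (|z - c| - r) 0 ^ 2 ≤ (z - c') ^ 2 := by
  rw [← sq_abs (z - c')]
  refine pow_le_pow_left₀ (le_max_right _ _) (max_le ?_ (abs_nonneg _)) 2
  linarith [abs_sub_le z c' c]

theorem lowerLoss_le_treeLoss_le_upperLoss {p q : ℝ × ℝ × (Fin d → ℝ)} {r : ℝ}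
    (hq : dist q p ≤ r) (w : (Fin d → ℝ) × ℝ) :
    lowerLoss p r w ≤ treeLoss w.1 w.2 q ∧ treeLoss w.1 w.2 q ≤ upperLoss p r w := by
  have h₁ : |q.1 - p.1| ≤ r := (le_max_left _ _).trans hq
  have h₂ : |q.2.1 - p.2.1| ≤ r := ((le_max_left _ _).trans (le_max_right _ _)).trans hq
  have h₃ : ∀ j, |q.2.2 j - p.2.2 j| ≤ r := fun j =>
    ((dist_le_pi_dist q.2.2 p.2.2 j).trans ((le_max_right _ _).trans (le_max_right _ _))).trans hq
  rw [treeLoss_eq_boxSplit]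
  constructor
  · exact boxSplit_mono (fun j => by linarith [(abs_sub_le_iff.1 (h₃ j)).2])
      (fun j => by linarith [(abs_sub_le_iff.1 (h₃ j)).1]) (sq_max_abs_sub_sub_le_sq_sub h₁)
      (sq_max_abs_sub_sub_le_sq_sub h₂) (sq_nonneg _) (sq_nonneg _)
  · exact boxSplit_mono (fun j => by linarith [(abs_sub_le_iff.1 (h₃ j)).1])
      (fun j => by linarith [(abs_sub_le_iff.1 (h₃ j)).2]) (sq_sub_le_sq_abs_sub_add h₁)
      (sq_sub_le_sq_abs_sub_add h₂) (sq_nonneg _) (sq_nonneg _)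

theorem measurable_upperLoss (p : ℝ × ℝ × (Fin d → ℝ)) (r : ℝ) : Measurable (upperLoss p r) :=
  measurable_boxSplit measurable_fst (by fun_prop) (by fun_prop) _ _

theorem measurable_lowerLoss (p : ℝ × ℝ × (Fin d → ℝ)) (r : ℝ) : Measurable (lowerLoss p r) :=
  measurable_boxSplit measurable_fst (by fun_prop) (by fun_prop) _ _

def envelopeBound (p : ℝ × ℝ × (Fin d → ℝ)) (R : ℝ) (w : (Fin d → ℝ) × ℝ) : ℝ :=
  (|w.2 - p.1| + R) ^ 2 + (|w.2 - p.2.1| + R) ^ 2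

theorem abs_upperLoss_le (p : ℝ × ℝ × (Fin d → ℝ)) {r R : ℝ} (hr : |r| ≤ R)
    (w : (Fin d → ℝ) × ℝ) : |upperLoss p r w| ≤ envelopeBound p R w := by
  have hR := abs_le.1 hr
  refine (abs_boxSplit_le _ _ _ _ _).trans (add_le_add ?_ ?_) <;>
    rw [abs_of_nonneg (sq_nonneg _)] <;>
    exact sq_le_sq' (by linarith [abs_nonneg (w.2 - p.1), abs_nonneg (w.2 - p.2.1)])
      (by linarith)

theorem abs_lowerLoss_le (p : ℝ × ℝ × (Fin d → ℝ)) {r R : ℝ} (hr : |r| ≤ R)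
    (w : (Fin d → ℝ) × ℝ) : |lowerLoss p r w| ≤ envelopeBound p R w := by
  have hR := abs_le.1 hr
  refine (abs_boxSplit_le _ _ _ _ _).trans (add_le_add ?_ ?_) <;>
    rw [abs_of_nonneg (sq_nonneg _)] <;>
    exact pow_le_pow_left₀ (le_max_right _ _)
      (max_le (by linarith) (by linarith [abs_nonneg (w.2 - p.1), abs_nonneg (w.2 - p.2.1)])) 2

theorem tendsto_upperLoss {p : ℝ × ℝ × (Fin d → ℝ)} {w : (Fin d → ℝ) × ℝ}
    (hw : ∀ j, w.1 j ≠ p.2.2 j) :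
    Tendsto (fun r => upperLoss p r w) (𝓝 0) (𝓝 (treeLoss w.1 w.2 p)) := by
  rw [treeLoss_eq_boxSplit, ← sq_abs (w.2 - p.1), ← sq_abs (w.2 - p.2.1)]
  exact tendsto_boxSplit hw ((continuous_pi fun j => by fun_prop).tendsto' _ _ (by simp))
    ((continuous_pi fun j => by fun_prop).tendsto' _ _ (by simp))
    ((by fun_prop : Continuous fun r : ℝ => (|w.2 - p.1| + r) ^ 2).tendsto' _ _ (by simp))
    ((by fun_prop : Continuous fun r : ℝ => (|w.2 - p.2.1| + r) ^ 2).tendsto' _ _ (by simp))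

theorem tendsto_lowerLoss {p : ℝ × ℝ × (Fin d → ℝ)} {w : (Fin d → ℝ) × ℝ}
    (hw : ∀ j, w.1 j ≠ p.2.2 j) :
    Tendsto (fun r => lowerLoss p r w) (𝓝 0) (𝓝 (treeLoss w.1 w.2 p)) := by
  rw [treeLoss_eq_boxSplit, ← sq_abs (w.2 - p.1), ← sq_abs (w.2 - p.2.1)]
  exact tendsto_boxSplit hw ((continuous_pi fun j => by fun_prop).tendsto' _ _ (by simp))
    ((continuous_pi fun j => by fun_prop).tendsto' _ _ (by simp))
    ((by fun_prop : Continuous fun r : ℝ => max (|w.2 - p.1| - r) 0 ^ 2).tendsto' _ _ (by simp))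
    ((by fun_prop : Continuous fun r : ℝ => max (|w.2 - p.2.1| - r) 0 ^ 2).tendsto' _ _ (by simp))

variable {ρ : Measure ((Fin d → ℝ) × ℝ)} [IsFiniteMeasure ρ]

theorem integrable_envelopeBound (hZ : MemLp Prod.snd 2 ρ) (p : ℝ × ℝ × (Fin d → ℝ)) (R : ℝ) :
    Integrable (envelopeBound p R) ρ := by
  have h : ∀ c, Integrable (fun w : (Fin d → ℝ) × ℝ => (|w.2 - c| + R) ^ 2) ρ := fun c =>
    ((hZ.sub (memLp_const c)).abs.add (memLp_const R)).integrable_sq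
  exact (h p.1).add (h p.2.1)

theorem integrable_upperLoss (hZ : MemLp Prod.snd 2 ρ) (p : ℝ × ℝ × (Fin d → ℝ)) (r : ℝ) :
    Integrable (upperLoss p r) ρ :=
  (integrable_envelopeBound hZ p |r|).mono' (measurable_upperLoss p r).aestronglyMeasurable
    (ae_of_all _ fun w => abs_upperLoss_le p le_rfl w)

theorem integrable_lowerLoss (hZ : MemLp Prod.snd 2 ρ) (p : ℝ × ℝ × (Fin d → ℝ)) (r : ℝ) :
    Integrable (lowerLoss p r) ρ :=
  (integrable_envelopeBound hZ p |r|).mono' (measurable_lowerLoss p r).aestronglyMeasurable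
    (ae_of_all _ fun w => abs_lowerLoss_le p le_rfl w)

theorem eventually_abs_le_one : ∀ᶠ r : ℝ in 𝓝 0, |r| ≤ 1 :=
  (continuous_abs.tendsto' 0 0 abs_zero).eventually (eventually_le_nhds one_pos)

theorem tendsto_integral_upperLoss (hZ : MemLp Prod.snd 2 ρ) {p : ℝ × ℝ × (Fin d → ℝ)}
    (hgen : ∀ᵐ w ∂ρ, ∀ j, w.1 j ≠ p.2.2 j) :
    Tendsto (fun r => ∫ w, upperLoss p r w ∂ρ) (𝓝 0) (𝓝 (∫ w, treeLoss w.1 w.2 p ∂ρ)) :=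
  tendsto_integral_filter_of_dominated_convergence (envelopeBound p 1)
    (.of_forall fun r => (measurable_upperLoss p r).aestronglyMeasurable)
    (eventually_abs_le_one.mono fun _ hr => ae_of_all _ (abs_upperLoss_le p hr))
    (integrable_envelopeBound hZ p 1) (hgen.mono fun _ => tendsto_upperLoss)

theorem tendsto_integral_lowerLoss (hZ : MemLp Prod.snd 2 ρ) {p : ℝ × ℝ × (Fin d → ℝ)}
    (hgen : ∀ᵐ w ∂ρ, ∀ j, w.1 j ≠ p.2.2 j) :
    Tendsto (fun r => ∫ w, lowerLoss p r w ∂ρ) (𝓝 0) (𝓝 (∫ w, treeLoss w.1 w.2 p ∂ρ)) :=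
  tendsto_integral_filter_of_dominated_convergence (envelopeBound p 1)
    (.of_forall fun r => (measurable_lowerLoss p r).aestronglyMeasurable)
    (eventually_abs_le_one.mono fun _ hr => ae_of_all _ (abs_lowerLoss_le p hr))
    (integrable_envelopeBound hZ p 1) (hgen.mono fun _ => tendsto_lowerLoss)

theorem hasLocalBracket_treeLoss (hρ : ρ.map Prod.fst ≪ volume) (hZ : MemLp Prod.snd 2 ρ)
    (p : ℝ × ℝ × (Fin d → ℝ)) {ε : ℝ} (hε : 0 < ε) :
    HasLocalBracket ρ (fun q w => treeLoss w.1 w.2 q) p ε := by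
  -- Off the faces of the box the envelopes converge to the loss, and the faces are null.
  have hgen : ∀ᵐ w ∂ρ, ∀ j, w.1 j ≠ p.2.2 j :=
    ae_of_ae_map measurable_fst.aemeasurable (ae_forall_apply_ne_of_absolutelyContinuous hρ _)
  have hwidth : Tendsto (fun r => ∫ w, upperLoss p r w ∂ρ - ∫ w, lowerLoss p r w ∂ρ) (𝓝 0)
      (𝓝 0) := by
    simpa using (tendsto_integral_upperLoss hZ hgen).sub (tendsto_integral_lowerLoss hZ hgen)
  obtain ⟨r, hr, hrpos⟩ :=
    ((hwidth.eventually (gt_mem_nhds hε)).filter_mono nhdsWithin_le_nhds |>.and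
      (self_mem_nhdsWithin : Set.Ioi (0 : ℝ) ∈ 𝓝[>] 0)).exists
  refine ⟨r, hrpos, lowerLoss p r, upperLoss p r, measurable_lowerLoss p r,
    measurable_upperLoss p r, integrable_lowerLoss hZ p r, integrable_upperLoss hZ p r,
    fun q hq => ?_, by linarith⟩
  exact ⟨fun w => (lowerLoss_le_treeLoss_le_upperLoss (mem_ball.1 hq).le w).1,
    fun w => (lowerLoss_le_treeLoss_le_upperLoss (mem_ball.1 hq).le w).2⟩

end TreeLoss

theorem tendsto_infDist_empirical_tree_loss_argmin_general {Ω : Type*} [MeasurableSpace Ω]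
    (μ : Measure Ω) [IsProbabilityMeasure μ]
    {d : ℕ} (X : Ω → (Fin d → ℝ)) (hX : Measurable X)
    (hdens : Measure.map X μ ≪ (volume : Measure (Fin d → ℝ)))
    (Z : Ω → ℝ) (hZ : MemLp Z 2 μ)
    (W : ℕ → Ω → (Fin d → ℝ) × ℝ) (hWmeas : ∀ m, Measurable (W m))
    (hWindep : iIndepFun W μ)
    (hWident : ∀ m, Measure.map (W m) μ = Measure.map (fun ω => (X ω, Z ω)) μ)
    (C : ℝ)
    (K : Set (ℝ × ℝ × (Fin d → ℝ)))
    (hK : K = Set.Icc (-C) C ×ˢ Set.Icc (-C) C ×ˢ Set.Icc (0 : Fin d → ℝ) 1)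
    (g : ℕ → Ω → ℝ × ℝ × (Fin d → ℝ))
    (hgK : ∀ M ω, g M ω ∈ K)
    (hgmin : ∀ (M : ℕ) ω, (M : ℝ)⁻¹ * (∑ m ∈ Finset.range M, treeLoss (W m ω).1 (W m ω).2 (g M ω))
      = sInf ((fun p => (M : ℝ)⁻¹ * ∑ m ∈ Finset.range M, treeLoss (W m ω).1 (W m ω).2 p) '' K)) :
    ∀ᵐ ω ∂μ,
      Tendsto (fun M : ℕ => Metric.infDist (g M ω)
          {p ∈ K | (∫ ω', treeLoss (X ω') (Z ω') p ∂μ)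
            = sInf ((fun p' => ∫ ω', treeLoss (X ω') (Z ω') p' ∂μ) '' K)})
        atTop (nhds 0) := by
  set ρ := μ.map fun ω => (X ω, Z ω)
  have hXZ : AEMeasurable (fun ω => (X ω, Z ω)) μ :=
    hX.aemeasurable.prodMk hZ.aestronglyMeasurable.aemeasurable
  have hρX : ρ.map Prod.fst ≪ volume := by
    rwa [AEMeasurable.map_map_of_aemeasurable measurable_fst.aemeasurable hXZ]
  have hρZ : MemLp Prod.snd 2 ρ :=
    (memLp_map_measure_iff measurable_snd.aestronglyMeasurable hXZ).2 hZ
  have hℓ : ∀ q, AEStronglyMeasurable (fun w => treeLoss w.1 w.2 q) ρ := fun q =>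
    (measurable_treeLoss q).aestronglyMeasurable
  have hν : ∀ q, ∫ ω, treeLoss (X ω) (Z ω) q ∂μ = ∫ w, treeLoss w.1 w.2 q ∂ρ := fun q =>
    (integral_map hXZ (hℓ q)).symm
  have hKc : IsCompact K := hK ▸ isCompact_Icc.prod (isCompact_Icc.prod isCompact_Icc)
  have hbr := fun ε (hε : 0 < ε) p (_ : p ∈ K) => hasLocalBracket_treeLoss hρX hρZ p hε
  simp only [hν]
  filter_upwards [ae_tendstoUniformlyOn_empiricalMean hWmeas hWindep hWident hℓ hKc hbr]
    with ω hω
  refine tendsto_infDist_setOf_eq_csInf_of_tendstoUniformlyOn hKc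
    (fun p _ => (continuousAt_integral_of_hasLocalBracket hℓ fun ε hε =>
      hasLocalBracket_treeLoss hρX hρZ p hε).continuousWithinAt) hω (hgK · ω) fun M => ?_
  have hbdd : BddBelow ((fun p => empiricalMean W (fun w => treeLoss w.1 w.2 p) M ω) '' K) :=
    ⟨0, Set.forall_mem_image.2 fun p _ => empiricalMean_nonneg (fun w => sq_nonneg _) M ω⟩
  exact fun p hp => (hgmin M ω).trans_le (csInf_le hbdd ⟨p, hp, rfl⟩)

/-- Let `X` be valued in `[0,1]^d` with a density w.r.t. Lebesgue measure, `Z` square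
integrable, and `((X_m, Z_m))` i.i.d. copies of `(X, Z)`.  With the empirical loss `ν_M` and
the expected loss `ν` as above, fix `C > 0`, `K = [−C, C]² × [0,1]^d`,
`S* = {(α, β, a) ∈ K : ν(α, β, a) = inf_K ν}`, and a family of minimizers
`(α_M, β_M, a_M) ∈ K` of `ν_M` over `K`.  Then, almost surely, the distance from
`(α_M, β_M, a_M)` to `S*` tends to `0` as `M → ∞`. -/
theorem tendsto_infDist_empirical_tree_loss_argmin {Ω : Type*} [MeasurableSpace Ω]
    (μ : Measure Ω) [IsProbabilityMeasure μ]
    {d : ℕ} (X : Ω → (Fin d → ℝ)) (hX : Measurable X)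
    (hXval : ∀ ω, X ω ∈ Set.Icc (0 : Fin d → ℝ) 1)
    (hdens : Measure.map X μ ≪ (volume : Measure (Fin d → ℝ)))
    (Z : Ω → ℝ) (hZ : MemLp Z 2 μ)
    (W : ℕ → Ω → (Fin d → ℝ) × ℝ) (hWmeas : ∀ m, Measurable (W m))
    (hWindep : iIndepFun W μ)
    (hWident : ∀ m, Measure.map (W m) μ = Measure.map (fun ω => (X ω, Z ω)) μ)
    (C : ℝ) (hC : 0 < C)
    (K : Set (ℝ × ℝ × (Fin d → ℝ)))
    (hK : K = Set.Icc (-C) C ×ˢ Set.Icc (-C) C ×ˢ Set.Icc (0 : Fin d → ℝ) 1)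
    (g : ℕ → Ω → ℝ × ℝ × (Fin d → ℝ))
    (hgK : ∀ M ω, g M ω ∈ K)
    (hgmin : ∀ (M : ℕ) ω, (M : ℝ)⁻¹ * (∑ m ∈ Finset.range M, treeLoss (W m ω).1 (W m ω).2 (g M ω))
      = sInf ((fun p => (M : ℝ)⁻¹ * ∑ m ∈ Finset.range M, treeLoss (W m ω).1 (W m ω).2 p) '' K)) :
    ∀ᵐ ω ∂μ,
      Tendsto (fun M : ℕ => Metric.infDist (g M ω)
          {p ∈ K | (∫ ω', treeLoss (X ω') (Z ω') p ∂μ)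
            = sInf ((fun p' => ∫ ω', treeLoss (X ω') (Z ω') p' ∂μ) '' K)})
        atTop (nhds 0) :=
  tendsto_infDist_empirical_tree_loss_argmin_general μ X hX hdens Z hZ W hWmeas hWindep hWident C K
    hK g hgK hgmin
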